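/- Let 0 < ε < 1 be a real number and let G be a graph on n ≥ 2 vertices. Set p = 2⌈n/ε⌉ and q = ⌈(1+ε)(p−1)⌉ − (n+p). Let G' be the graph obtained from a copy of G by adding: p new pairwise adjacent vertices u_1,…,u_p; an edge v u_1 for every vertex v of G; and q new vertices w_1,…,w_q with the edges u_1 w_1, w_{i−1} w_i for 2 ≤ i ≤ q, and w_q u_2. Then q ≥ 1, G' is connected, the degeneracy of G' equals p−1, G' has exactly ⌈(1+ε)(p−1)⌉ vertices, and G' contains a path with at least (1+ε)·dg(G') vertices if and only if G has a Hamiltonian path. -/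

import Mathlib

/-!
The clique `u_1, …, u_p` gives `dg(G') ≥ p - 1`; every other vertex has degree at most
`max (n + 1) 4 ≤ p - 1`, and a subgraph inside the clique has minimum degree at most `p - 1`,
so `dg(G') = p - 1`. The choice of `q` makes `G'` have exactly `⌈(1 + ε)(p - 1)⌉` vertices,
so a path with `(1 + ε) dg(G')` vertices is a Hamiltonian path of `G'`. Since `u_1` separates
`G` from the other vertices, the part of such a path on the side of `u_1` away from `u_2`
is a Hamiltonian path of `G`; conversely a Hamiltonian path of `G` continues through
`u_1, w_1, …, w_q, u_2, …, u_p`.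
-/

/-- The degeneracy of a finite simple graph: the maximum, over all nonempty
(induced) subgraphs given by a vertex set `s`, of the minimum degree inside `s`. -/
noncomputable def SimpleGraph.degeneracy {V : Type*} [Fintype V] (G : SimpleGraph V) : ℕ :=
  sSup {d : ℕ | ∃ s : Set V, s.Nonempty ∧ ∀ v ∈ s, d ≤ (G.neighborSet v ∩ s).ncard}

/-- The graph `G'` of the hardness reduction for paths: a copy of `G`, plus `p`
pairwise adjacent vertices `u_1, …, u_p` (here `u_i` is `Sum.inr (Sum.inl i)` with
`u_1` having index `0`), an edge `v u_1` for every vertex `v` of `G`, and a path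
`w_1, …, w_q` of new vertices (`w_i` is `Sum.inr (Sum.inr i)`) with edges `u_1 w_1`
and `w_q u_2`. -/
def pathHardnessGraph {V : Type*} (G : SimpleGraph V) (p q : ℕ) :
    SimpleGraph (V ⊕ (Fin p ⊕ Fin q)) :=
  SimpleGraph.fromRel (fun x y =>
    match x, y with
    | Sum.inl a, Sum.inl b => G.Adj a b
    | Sum.inl _, Sum.inr (Sum.inl i) => i.val = 0
    | Sum.inr (Sum.inl _), Sum.inr (Sum.inl _) => True
    | Sum.inr (Sum.inl i), Sum.inr (Sum.inr j) =>
        (i.val = 0 ∧ j.val = 0) ∨ (i.val = 1 ∧ j.val = q - 1)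
    | Sum.inr (Sum.inr i), Sum.inr (Sum.inr j) => j.val = i.val + 1
    | _, _ => False)

lemma Fin.ncard_preimage_val_le {n : ℕ} (S : Set ℕ) (hS : S.Finite) :
    (Fin.val ⁻¹' S : Set (Fin n)).ncard ≤ S.ncard :=
  Set.ncard_le_ncard_of_injOn Fin.val (fun _ h => h) Fin.val_injective.injOn hS

theorem List.IsChain.iff_of_mem {α : Type*} {P : α → Prop} {l : List α}
    (hl : l.IsChain fun a b => (P a ↔ P b)) {a b : α} (ha : a ∈ l) (hb : b ∈ l) : P a ↔ P b := by
  have key := hl.induction (fun x => P x ↔ P (l.head (List.ne_nil_of_mem ha))) l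
    (fun _ _ hxy hx => hxy.symm.trans hx) (fun _ => Iff.rfl)
  exact (key a ha).trans (key b hb).symm

theorem List.Nodup.forall_mem_iff_card_le_length {α : Type*} [Fintype α] {l : List α}
    (hl : l.Nodup) : (∀ x, x ∈ l) ↔ Fintype.card α ≤ l.length := by
  classical
  rw [← List.toFinset_card_of_nodup hl, ← not_lt, Finset.card_lt_iff_ne_univ, not_not,
    Finset.eq_univ_iff_forall]
  simp only [List.mem_toFinset]

namespace SimpleGraph

section Degeneracy

variable {V : Type*} [Fintype V] {G : SimpleGraph V} {d : ℕ}

lemma bddAbove_degeneracy_set :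
    BddAbove {d : ℕ | ∃ s : Set V, s.Nonempty ∧ ∀ v ∈ s, d ≤ (G.neighborSet v ∩ s).ncard} := by
  refine ⟨Nat.card V, ?_⟩
  rintro d ⟨s, ⟨v, hv⟩, hd⟩
  exact (hd v hv).trans (Set.ncard_le_card _)

lemma le_degeneracy {s : Set V} (hs : s.Nonempty)
    (h : ∀ v ∈ s, d ≤ (G.neighborSet v ∩ s).ncard) : d ≤ G.degeneracy :=
  le_csSup bddAbove_degeneracy_set ⟨s, hs, h⟩

lemma degeneracy_le (h : ∀ s : Set V, s.Nonempty → ∃ v ∈ s, (G.neighborSet v ∩ s).ncard ≤ d) :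
    G.degeneracy ≤ d := by
  refine csSup_le' ?_
  rintro e ⟨s, hs, he⟩
  obtain ⟨v, hv, hvd⟩ := h s hs
  exact (he v hv).trans hvd

lemma IsClique.ncard_sub_one_le_degeneracy {s : Set V} (hs : G.IsClique s) (hne : s.Nonempty) :
    s.ncard - 1 ≤ G.degeneracy := by
  refine SimpleGraph.le_degeneracy hne fun v hv => ?_
  rw [← Set.ncard_sdiff_singleton_of_mem hv]
  exact Set.ncard_le_ncard (fun w hw => ⟨hs hw.1 hv hw.2 |>.symm, hw.1⟩) (Set.toFinite _)

lemma degeneracy_le_of_ncard_neighborSet_le (U : Set V) (hU : U.ncard ≤ d + 1)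
    (h : ∀ v ∉ U, (G.neighborSet v).ncard ≤ d) : G.degeneracy ≤ d := by
  refine degeneracy_le fun s ⟨v, hv⟩ => ?_
  by_cases hsU : s ⊆ U
  · refine ⟨v, hv, ?_⟩
    calc (G.neighborSet v ∩ s).ncard ≤ (s \ {v}).ncard :=
          Set.ncard_le_ncard (fun w hw => ⟨hw.2, (G.ne_of_adj hw.1).symm⟩) (Set.toFinite _)
      _ = s.ncard - 1 := Set.ncard_sdiff_singleton_of_mem hv
      _ ≤ d := by have := Set.ncard_le_ncard hsU (Set.toFinite _); omega
  · obtain ⟨w, hws, hwU⟩ := Set.not_subset.mp hsU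
    exact ⟨w, hws, (Set.ncard_le_ncard Set.inter_subset_left (Set.toFinite _)).trans (h w hwU)⟩

end Degeneracy

section HamiltonianPath

variable {V : Type*} {G : SimpleGraph V}

lemma exists_isPath_forall_mem_support_iff_exists_list [Nonempty V] :
    (∃ (u v : V) (w : G.Walk u v), w.IsPath ∧ ∀ x, x ∈ w.support) ↔
      ∃ l : List V, l.IsChain G.Adj ∧ l.Nodup ∧ ∀ x, x ∈ l := by
  constructor
  · rintro ⟨u, v, w, hw, hmem⟩
    exact ⟨w.support, w.isChain_adj_support, hw.support_nodup, hmem⟩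
  · rintro ⟨l, hchain, hnodup, hmem⟩
    have hne : l ≠ [] := List.ne_nil_of_mem (hmem (Classical.arbitrary V))
    refine ⟨_, _, Walk.ofSupport l hne hchain, ?_⟩
    rw [Walk.isPath_def, Walk.support_ofSupport]
    exact ⟨hnodup, hmem⟩

lemma exists_isPath_card_le_length_support_iff [Fintype V] :
    (∃ (u v : V) (w : G.Walk u v), w.IsPath ∧ Fintype.card V ≤ w.support.length) ↔
      ∃ (u v : V) (w : G.Walk u v), w.IsPath ∧ ∀ x, x ∈ w.support :=
  exists_congr fun _ => exists_congr fun _ => exists_congr fun _ =>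
    and_congr_right fun hw => hw.support_nodup.forall_mem_iff_card_le_length.symm

end HamiltonianPath

end SimpleGraph

namespace pathHardnessGraph

open SimpleGraph

variable {V : Type*} {G : SimpleGraph V} {p q : ℕ}

@[simp] lemma adj_inl_inl {a b : V} :
    (pathHardnessGraph G p q).Adj (Sum.inl a) (Sum.inl b) ↔ G.Adj a b := by
  simp only [pathHardnessGraph, fromRel_adj, ne_eq, Sum.inl.injEq]
  exact ⟨fun ⟨_, h⟩ => h.elim id (·.symm), fun h => ⟨h.ne, Or.inl h⟩⟩

@[simp] lemma adj_inl_u {a : V} {i : Fin p} :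
    (pathHardnessGraph G p q).Adj (Sum.inl a) (Sum.inr (Sum.inl i)) ↔ i.val = 0 := by
  simp [pathHardnessGraph]

@[simp] lemma adj_u_inl {a : V} {i : Fin p} :
    (pathHardnessGraph G p q).Adj (Sum.inr (Sum.inl i)) (Sum.inl a) ↔ i.val = 0 := by
  rw [adj_comm, adj_inl_u]

@[simp] lemma adj_u_u {i j : Fin p} :
    (pathHardnessGraph G p q).Adj (Sum.inr (Sum.inl i)) (Sum.inr (Sum.inl j)) ↔ i ≠ j := by
  simp [pathHardnessGraph]

@[simp] lemma adj_u_w {i : Fin p} {j : Fin q} :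
    (pathHardnessGraph G p q).Adj (Sum.inr (Sum.inl i)) (Sum.inr (Sum.inr j)) ↔
      (i.val = 0 ∧ j.val = 0) ∨ (i.val = 1 ∧ j.val = q - 1) := by
  simp [pathHardnessGraph]

@[simp] lemma adj_w_u {i : Fin p} {j : Fin q} :
    (pathHardnessGraph G p q).Adj (Sum.inr (Sum.inr j)) (Sum.inr (Sum.inl i)) ↔
      (i.val = 0 ∧ j.val = 0) ∨ (i.val = 1 ∧ j.val = q - 1) := by
  rw [adj_comm, adj_u_w]

@[simp] lemma adj_w_w {i j : Fin q} :
    (pathHardnessGraph G p q).Adj (Sum.inr (Sum.inr i)) (Sum.inr (Sum.inr j)) ↔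
      (j.val = i.val + 1 ∨ i.val = j.val + 1) := by
  simp only [pathHardnessGraph, fromRel_adj, ne_eq, Sum.inr.injEq, Fin.ext_iff]
  omega

@[simp] lemma not_adj_inl_w {a : V} {j : Fin q} :
    ¬ (pathHardnessGraph G p q).Adj (Sum.inl a) (Sum.inr (Sum.inr j)) := by
  simp [pathHardnessGraph]

@[simp] lemma not_adj_w_inl {a : V} {j : Fin q} :
    ¬ (pathHardnessGraph G p q).Adj (Sum.inr (Sum.inr j)) (Sum.inl a) := by
  rw [adj_comm]
  exact not_adj_inl_w

lemma ncard_neighborSet_inl_le [Fintype V] (a : V) :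
    ((pathHardnessGraph G p q).neighborSet (Sum.inl a)).ncard ≤ Fintype.card V + 1 := by
  have hsub : (pathHardnessGraph G p q).neighborSet (Sum.inl a) ⊆
      Set.range Sum.inl ∪ (fun i => Sum.inr (Sum.inl i)) '' (Fin.val ⁻¹' {0}) := by
    rintro (b | i | j) h
    · exact Or.inl ⟨b, rfl⟩
    · exact Or.inr ⟨i, by simpa using h, rfl⟩
    · exact (not_adj_inl_w (G := G) h).elim
  calc _ ≤ _ := Set.ncard_le_ncard hsub (Set.toFinite _)
    _ ≤ _ := Set.ncard_union_le _ _
    _ ≤ Fintype.card V + ({0} : Set ℕ).ncard := by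
      gcongr
      · rw [Set.ncard_range_of_injective Sum.inl_injective, Nat.card_eq_fintype_card]
      · exact (Set.ncard_image_le (Set.toFinite _)).trans
          (Fin.ncard_preimage_val_le _ (Set.toFinite _))
    _ = Fintype.card V + 1 := by rw [Set.ncard_singleton]

lemma ncard_neighborSet_w_le (j : Fin q) :
    ((pathHardnessGraph G p q).neighborSet (Sum.inr (Sum.inr j))).ncard ≤ 4 := by
  have hsub : (pathHardnessGraph G p q).neighborSet (Sum.inr (Sum.inr j)) ⊆
      (fun i => Sum.inr (Sum.inl i)) '' (Fin.val ⁻¹' {0, 1}) ∪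
        (fun k => Sum.inr (Sum.inr k)) '' (Fin.val ⁻¹' {j.val - 1, j.val + 1}) := by
    -- `j - 1` truncates to `0` when `j = 0`, which only enlarges the right-hand side.
    rintro (b | i | k) h <;> simp only [mem_neighborSet] at h
    · exact (not_adj_inl_w h.symm).elim
    · refine Or.inl ⟨i, ?_, rfl⟩
      have := adj_u_w.mp h.symm
      simp only [Set.mem_preimage, Set.mem_insert_iff, Set.mem_singleton_iff]
      omega
    · refine Or.inr ⟨k, ?_, rfl⟩
      have := adj_w_w.mp h
      simp only [Set.mem_preimage, Set.mem_insert_iff, Set.mem_singleton_iff]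
      omega
  have hpair (a b : ℕ) : ({a, b} : Set ℕ).ncard ≤ 2 :=
    (Set.ncard_insert_le _ _).trans (by rw [Set.ncard_singleton])
  have himage {n : ℕ} (f : Fin n → V ⊕ (Fin p ⊕ Fin q)) (a b : ℕ) :
      (f '' (Fin.val ⁻¹' {a, b})).ncard ≤ 2 :=
    (Set.ncard_image_le (Set.toFinite _)).trans
      ((Fin.ncard_preimage_val_le _ (Set.toFinite _)).trans (hpair a b))
  calc _ ≤ _ := Set.ncard_le_ncard hsub (Set.toFinite _)
    _ ≤ _ := Set.ncard_union_le _ _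
    _ ≤ 2 + 2 := add_le_add (himage _ _ _) (himage _ _ _)

lemma isClique_range_u :
    (pathHardnessGraph G p q).IsClique (Set.range fun i => Sum.inr (Sum.inl i)) := by
  rintro _ ⟨i, rfl⟩ _ ⟨j, rfl⟩ hij
  exact adj_u_u.mpr fun h => hij (h ▸ rfl)

lemma ncard_range_u :
    (Set.range fun i : Fin p => (Sum.inr (Sum.inl i) : V ⊕ (Fin p ⊕ Fin q))).ncard = p := by
  rw [Set.ncard_range_of_injective (fun i j h => by simpa using h), Nat.card_fin]

theorem degeneracy_eq [Fintype V] (hp : Fintype.card V + 2 ≤ p) (hp5 : 5 ≤ p) :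
    (pathHardnessGraph G p q).degeneracy = p - 1 := by
  refine le_antisymm ?_ ?_
  · refine degeneracy_le_of_ncard_neighborSet_le _ (ncard_range_u.trans_le (by omega)) ?_
    rintro (a | i | j) h
    · exact (ncard_neighborSet_inl_le a).trans (by omega)
    · exact (h ⟨i, rfl⟩).elim
    · exact (ncard_neighborSet_w_le j).trans (by omega)
  · have := (isClique_range_u (G := G) (q := q)).ncard_sub_one_le_degeneracy
      (Set.range_nonempty_iff_nonempty.mpr ⟨(⟨0, by omega⟩ : Fin p)⟩)
    rwa [ncard_range_u] at this

lemma exists_isChain_nodup_mem_iff_notMem_range_inl (hp : 2 ≤ p) (hq : 1 ≤ q) :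
    ∃ t : List (V ⊕ (Fin p ⊕ Fin q)),
      (Sum.inr (Sum.inl ⟨0, by omega⟩) :: t).IsChain (pathHardnessGraph G p q).Adj ∧
      (Sum.inr (Sum.inl ⟨0, by omega⟩) :: t).Nodup ∧
      ∀ x, x ∈ Sum.inr (Sum.inl ⟨0, by omega⟩) :: t ↔ x ∉ Set.range Sum.inl := by
  refine ⟨List.ofFn (fun j : Fin q => Sum.inr (Sum.inr j)) ++
    List.ofFn (fun i : Fin (p - 1) => Sum.inr (Sum.inl ⟨i + 1, by omega⟩)), ?_, ?_, ?_⟩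
  · refine .cons (List.isChain_append.mpr ⟨?_, ?_, ?_⟩) ?_
    · exact List.isChain_ofFn.mpr fun i hi => by simp
    · exact List.isChain_ofFn.mpr fun i hi => by simp
    · simp [List.getLast?_eq_getElem?, List.head?_eq_getElem?, List.getElem?_ofFn]
    · rw [List.head?_append, List.head?_eq_getElem?, List.getElem?_ofFn, dif_pos (by omega)]
      simp
  · simp [List.nodup_append, List.nodup_ofFn, Function.Injective, Fin.ext_iff, List.mem_ofFn]
  · rintro (a | i | j)
    · simp
    · simp only [List.mem_cons, Sum.inr.injEq, Sum.inl.injEq, Fin.ext_iff, List.mem_append,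
        List.mem_ofFn, reduceCtorEq, exists_false, false_or, Set.mem_range, not_false_eq_true,
        iff_true]
      exact or_iff_not_imp_left.mpr fun h => ⟨⟨i - 1, by omega⟩, by simp only; omega⟩
    · simp [List.mem_ofFn]

theorem connected (hp : 2 ≤ p) (hq : 1 ≤ q) : (pathHardnessGraph G p q).Connected := by
  obtain ⟨t, hchain, -, hmem⟩ := exists_isChain_nodup_mem_iff_notMem_range_inl (G := G) hp hq
  have hreach := hchain.cons_induction
    ((pathHardnessGraph G p q).Reachable (Sum.inr (Sum.inl ⟨0, by omega⟩)) ·) t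
    (fun _ _ hxy hx => hx.trans hxy.reachable) (.refl _)
  refine (connected_iff_exists_forall_reachable _).mpr
    ⟨Sum.inr (Sum.inl ⟨0, by omega⟩), fun x => ?_⟩
  by_cases hx : x ∈ Set.range Sum.inl
  · obtain ⟨a, rfl⟩ := hx
    exact (Adj.reachable (by simp)).symm
  · rcases List.mem_cons.mp ((hmem x).mpr hx) with rfl | hxt
    exacts [.refl _, hreach x hxt]

lemma mem_range_inl_iff_of_adj {x y : V ⊕ (Fin p ⊕ Fin q)} {hp : 0 < p}
    (hxy : (pathHardnessGraph G p q).Adj x y) (hx : x ≠ Sum.inr (Sum.inl ⟨0, hp⟩)) (hy : y ≠ Sum.inr (Sum.inl ⟨0, hp⟩)) :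
    x ∈ Set.range Sum.inl ↔ y ∈ Set.range Sum.inl := by
  rcases x with a | i | i <;> rcases y with b | j | j <;> simp_all [Fin.ext_iff]

lemma isChain_iff_mem_range_inl {hp : 0 < p} {l : List (V ⊕ (Fin p ⊕ Fin q))}
    (hl : l.IsChain (pathHardnessGraph G p q).Adj) (hu0 : Sum.inr (Sum.inl ⟨0, hp⟩) ∉ l) :
    l.IsChain fun x y => (x ∈ Set.range Sum.inl ↔ y ∈ Set.range Sum.inl) :=
  hl.imp_of_mem_imp fun _ _ hx hy hxy =>
    mem_range_inl_iff_of_adj hxy (ne_of_mem_of_not_mem hx hu0) (ne_of_mem_of_not_mem hy hu0)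

lemma exists_list_of_isChain_append_cons [Nonempty V] {hp : 1 < p}
    {s t : List (V ⊕ (Fin p ⊕ Fin q))}
    (hchain : (s ++ Sum.inr (Sum.inl ⟨0, by omega⟩) :: t).IsChain (pathHardnessGraph G p q).Adj)
    (hnodup : (s ++ Sum.inr (Sum.inl ⟨0, by omega⟩) :: t).Nodup)
    (hmem : ∀ x, x ∈ s ++ Sum.inr (Sum.inl ⟨0, by omega⟩) :: t)
    (hu1 : Sum.inr (Sum.inl ⟨1, hp⟩) ∈ t) :
    ∃ l : List V, l.IsChain G.Adj ∧ l.Nodup ∧ ∀ x, x ∈ l := by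
  rw [List.nodup_append', List.nodup_cons] at hnodup
  obtain ⟨hs, ⟨hu0t, -⟩, hdisj⟩ := hnodup
  have hu0s : Sum.inr (Sum.inl ⟨0, by omega⟩) ∉ s := fun h => hdisj h List.mem_cons_self
  have hchain_s := isChain_iff_mem_range_inl hchain.left_of_append hu0s
  have hchain_t := isChain_iff_mem_range_inl hchain.right_of_append.tail hu0t
  have hinl_s (a : V) : Sum.inl a ∈ s := by
    rcases List.mem_append.mp (hmem (Sum.inl a)) with h | h
    · exact h
    · rcases List.mem_cons.mp h with h | h
      · simp at h
      · simpa using (hchain_t.iff_of_mem h hu1).mp ⟨a, rfl⟩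
  obtain ⟨m, rfl⟩ : s ∈ Set.range (List.map Sum.inl) := by
    rw [Set.range_list_map]
    exact fun x hx => (hchain_s.iff_of_mem (hinl_s (Classical.arbitrary V)) hx).mp ⟨_, rfl⟩
  refine ⟨m, ?_, hs.of_map _, fun a => ?_⟩
  · simpa [List.isChain_map] using hchain.left_of_append
  · simpa [List.mem_map_of_injective Sum.inl_injective] using hinl_s a

theorem exists_list_iff [Nonempty V] (hp : 2 ≤ p) (hq : 1 ≤ q) :
    (∃ l : List (V ⊕ (Fin p ⊕ Fin q)),
      l.IsChain (pathHardnessGraph G p q).Adj ∧ l.Nodup ∧ ∀ x, x ∈ l) ↔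
      ∃ l : List V, l.IsChain G.Adj ∧ l.Nodup ∧ ∀ x, x ∈ l := by
  constructor
  · rintro ⟨l, hchain, hnodup, hmem⟩
    obtain ⟨s, t, rfl⟩ := List.append_of_mem (hmem (Sum.inr (Sum.inl ⟨0, by omega⟩)))
    by_cases hu1 : Sum.inr (Sum.inl ⟨1, hp⟩) ∈ t
    · exact exists_list_of_isChain_append_cons hchain hnodup hmem hu1
    · -- `u_2` then lies before `u_1`; reversing the path puts it after `u_1`.
      have hrev : (s ++ Sum.inr (Sum.inl ⟨0, by omega⟩) :: t).reverse =
          t.reverse ++ Sum.inr (Sum.inl ⟨0, by omega⟩) :: s.reverse := by simp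
      refine exists_list_of_isChain_append_cons (s := t.reverse) (t := s.reverse) (hp := hp)
        (hrev ▸ List.isChain_reverse.mpr (hchain.imp fun _ _ h => h.symm))
        (hrev ▸ List.nodup_reverse.mpr hnodup) (fun x => hrev ▸ List.mem_reverse.mpr (hmem x)) ?_
      simpa [hu1, Fin.ext_iff] using hmem (Sum.inr (Sum.inl ⟨1, hp⟩))
  · rintro ⟨m, hchain, hnodup, hmem⟩
    obtain ⟨t, htchain, htnodup, htmem⟩ :=
      exists_isChain_nodup_mem_iff_notMem_range_inl (G := G) hp hq
    refine ⟨m.map Sum.inl ++ Sum.inr (Sum.inl ⟨0, by omega⟩) :: t, ?_, ?_, fun x => ?_⟩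
    · refine List.isChain_append.mpr ⟨?_, htchain, fun x hx y hy => ?_⟩
      · simpa [List.isChain_map] using hchain
      · obtain ⟨a, -, rfl⟩ := List.mem_map.mp (List.mem_of_mem_getLast? hx)
        obtain rfl : _ = y := Option.mem_some_iff.mp hy
        simp
    · refine List.nodup_append'.mpr ⟨hnodup.map Sum.inl_injective, htnodup, fun x hx hxt => ?_⟩
      obtain ⟨a, -, rfl⟩ := List.mem_map.mp hx
      exact (htmem _).mp hxt ⟨a, rfl⟩
    · by_cases hx : x ∈ Set.range Sum.inl
      · obtain ⟨a, rfl⟩ := hx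
        exact List.mem_append_left _ (List.mem_map_of_mem (hmem a))
      · exact List.mem_append_right _ ((htmem x).mpr hx)

end pathHardnessGraph

section Arithmetic

variable {n p : ℕ} {ε : ℝ}

lemma two_mul_add_two_le_of_eq_two_mul_ceil (hn : 0 < n) (hε0 : 0 < ε) (hε1 : ε < 1)
    (hp : (p : ℤ) = 2 * ⌈(n : ℝ) / ε⌉) : 2 * n + 2 ≤ p := by
  have : (n : ℤ) < ⌈(n : ℝ) / ε⌉ := by
    rw [Int.lt_ceil, Int.cast_natCast, lt_div_iff₀ hε0]
    nlinarith [(Nat.cast_pos (α := ℝ)).mpr hn]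
  omega

lemma natCast_add_lt_ceil_of_eq_two_mul_ceil (hn : 2 ≤ n) (hε0 : 0 < ε) (hε1 : ε < 1)
    (hp : (p : ℤ) = 2 * ⌈(n : ℝ) / ε⌉) : (n + p : ℤ) < ⌈(1 + ε) * ((p : ℝ) - 1)⌉ := by
  have hεp : 2 * (n : ℝ) ≤ ε * p := by
    have := (div_le_iff₀ hε0).mp (Int.le_ceil ((n : ℝ) / ε))
    have hpR : (p : ℝ) = 2 * ⌈(n : ℝ) / ε⌉ := by exact_mod_cast hp
    rw [hpR]
    linarith
  have hnR : (2 : ℝ) ≤ n := by exact_mod_cast hn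
  rw [Int.lt_ceil]
  push_cast
  linarith

end Arithmetic

/-- Let `0 < ε < 1`, let `G` be a graph on `n ≥ 2` vertices, let `p = 2⌈n/ε⌉` and
`q = ⌈(1+ε)(p-1)⌉ - (n+p)`, and let `G'` be the graph of the reduction. Then
`q ≥ 1`, `G'` is connected, `dg(G') = p - 1`, `G'` has exactly `⌈(1+ε)(p-1)⌉`
vertices, and `G'` has a path with at least `(1+ε)·dg(G')` vertices iff `G` has a
Hamiltonian path. -/
theorem path_above_degeneracy_tight {V : Type*} [Fintype V] (G : SimpleGraph V)
    (ε : ℝ) (hε0 : 0 < ε) (hε1 : ε < 1) (hn : 2 ≤ Fintype.card V)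
    (p q : ℕ)
    (hp : (p : ℤ) = 2 * ⌈(Fintype.card V : ℝ) / ε⌉)
    (hq : (q : ℤ) = ⌈(1 + ε) * ((p : ℝ) - 1)⌉ - (Fintype.card V + p)) :
    1 ≤ q ∧
    (pathHardnessGraph G p q).Connected ∧
    (pathHardnessGraph G p q).degeneracy = p - 1 ∧
    ((Fintype.card (V ⊕ (Fin p ⊕ Fin q)) : ℤ) = ⌈(1 + ε) * ((p : ℝ) - 1)⌉) ∧
    ((∃ (u v : V ⊕ (Fin p ⊕ Fin q)) (w : (pathHardnessGraph G p q).Walk u v),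
        w.IsPath ∧ (1 + ε) * ((pathHardnessGraph G p q).degeneracy : ℝ) ≤ w.support.length) ↔
     (∃ (u v : V) (w : G.Walk u v), w.IsPath ∧ ∀ x : V, x ∈ w.support)) := by
  have : Nonempty V := Fintype.card_pos_iff.mp (by omega)
  have hp2 := two_mul_add_two_le_of_eq_two_mul_ceil (by omega) hε0 hε1 hp
  have hq1 : 1 ≤ q := by have := natCast_add_lt_ceil_of_eq_two_mul_ceil hn hε0 hε1 hp; omega
  have hcard : (Fintype.card (V ⊕ (Fin p ⊕ Fin q)) : ℤ) = ⌈(1 + ε) * ((p : ℝ) - 1)⌉ := by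
    simp only [Fintype.card_sum, Fintype.card_fin]
    omega
  have hdeg : (pathHardnessGraph G p q).degeneracy = p - 1 :=
    pathHardnessGraph.degeneracy_eq (by omega) (by omega)
  have hlen (k : ℕ) : (1 + ε) * ((pathHardnessGraph G p q).degeneracy : ℝ) ≤ k ↔
      Fintype.card (V ⊕ (Fin p ⊕ Fin q)) ≤ k := by
    rw [hdeg, Nat.cast_sub (by omega), Nat.cast_one, ← Int.cast_natCast k, ← Int.ceil_le, ← hcard,
      Nat.cast_le]
  refine ⟨hq1, pathHardnessGraph.connected (by omega) hq1, hdeg, hcard, ?_⟩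
  simp only [hlen]
  rw [SimpleGraph.exists_isPath_card_le_length_support_iff,
    SimpleGraph.exists_isPath_forall_mem_support_iff_exists_list,
    SimpleGraph.exists_isPath_forall_mem_support_iff_exists_list]
  exact pathHardnessGraph.exists_list_iff (by omega) hq1
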